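/- Under the SUPER-ADAM (τ = 0) setting on a compact convex set X ⊆ ℝ^d — f(x) = E_{ξ∼D}[f(x;ξ)] differentiable and L-smooth, unbiased stochastic gradients with variance ≤ σ², f bounded below by f*; k > 0, m ≥ k², μ_t = k/(m+t)^{1/2}, α_{t+1} = c μ_t, 0 < γ ≤ ρ m^{1/2}/(8 L k), 8 L γ/ρ ≤ c ≤ m^{1/2}/k; x_1 ∈ X, g_1 = ∇f(x_1;ξ_1); H_t ⪰ ρ I_d symmetric, x̃_{t+1} = argmin_{x∈X}{⟨g_t, x⟩ + (1/(2γ))(x − x_t)ᵀH_t(x − x_t)}, x_{t+1} = (1 − μ_t)x_t + μ_t x̃_{t+1}, ξ_{t+1} ∼ D independent of the past, g_{t+1} = (1 − α_{t+1})g_t + α_{t+1}∇f(x_{t+1};ξ_{t+1}) — it holds for every T ≥ 1 that (1/T) Σ_{t=1}^T E[ (1/(4ρ²)) ‖∇f(x_t) − g_t‖² + (1/(4γ²)) ‖x̃_{t+1} − x_t‖² ] ≤ M (m+T)^{1/2} / T, where M = (f(x_1) − f*)/(ρ γ k) + 2σ²/(ρ γ k L) + 2 m σ² ln(m+T)/(ρ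 γ k L). -/

import Mathlib

/-!
The two expectations `A t = E‖∇f(x t) - g t‖²` and `B t = E‖xtil t - x t‖²` obey two recursions.
The descent lemma for the `L`-smooth `f`, together with the first-order optimality of `xtil t` for
the quadratic model (whose metric `H t` is `ρ`-coercive), gives
`E f(x (t+1)) ≤ E f(x t) + μ t γ/(2ρ) A t - μ t 7ρ/(16γ) B t`. As the fresh sample `ξ (t+1)` is
independent of `(x t, xtil t, g t)` and unbiased, the cross term of the momentum update vanishes in
expectation, so `A (t+1) ≤ (1 - α) A t + (L μ t)² / α B t + α² σ²` with `α = c μ t`.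
Telescoping both over `t = 1, …, T`, using `∑ μ t² ≤ k² log ((m + T) / m)`, and adding them with
weights made compatible by `8 L γ ≤ ρ c` bounds `∑ μ t (γ/(4ρ) A t + ρ/(4γ) B t)` by `ρ γ k M`.
Since `μ t ≥ μ T = k / √(m + T)`, dividing by `T` gives the claim.
-/

open scoped RealInnerProductSpace Topology
open MeasureTheory ProbabilityTheory Filter

section InnerProductSpace

variable {E : Type*} [NormedAddCommGroup E] [InnerProductSpace ℝ E]

theorem le_add_inner_add_half_mul_sq_of_gradient_lipschitz [CompleteSpace E]
    {f : E → ℝ} {gf : E → E} {L : ℝ} (hgf : ∀ x, HasGradientAt f (gf x) x)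
    (hsmooth : ∀ x y, ‖gf x - gf y‖ ≤ L * ‖x - y‖) (x y : E) :
    f y ≤ f x + ⟪gf x, y - x⟫ + L / 2 * ‖y - x‖ ^ 2 := by
  set v := y - x
  have hline : ∀ s : ℝ, HasDerivAt (fun s : ℝ => f (x + s • v)) ⟪gf (x + s • v), v⟫ s := by
    intro s
    have hpath : HasDerivAt (fun s : ℝ => x + s • v) v s := by
      simpa using ((hasDerivAt_id s).smul_const v).const_add x
    simpa [Function.comp_def] using (hgf (x + s • v)).hasFDerivAt.comp_hasDerivAt s hpath
  have hbound : ∀ s : ℝ, HasDerivAt (fun s : ℝ => f x + s * ⟪gf x, v⟫ + s ^ 2 * (L / 2 * ‖v‖ ^ 2))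
      (⟪gf x, v⟫ + 2 * s * (L / 2 * ‖v‖ ^ 2)) s := by
    intro s
    exact (((hasDerivAt_mul_const _).const_add (f x)).add
      ((hasDerivAt_pow 2 s).mul_const _)).congr_deriv (by push_cast; ring)
  -- compare `s ↦ f (x + s • v)` on `[0, 1]` with the quadratic model through right derivatives
  have key := image_le_of_deriv_right_le_deriv_boundary (a := 0) (b := 1)
    (fun s _ => (hline s).continuousAt.continuousWithinAt)
    (fun s _ => (hline s).hasDerivWithinAt) (by simp)
    (fun s _ => (hbound s).continuousAt.continuousWithinAt)
    (fun s _ => (hbound s).hasDerivWithinAt) ?_ (Set.right_mem_Icc.2 zero_le_one)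
  · simpa [v] using key
  intro s hs
  calc ⟪gf (x + s • v), v⟫ = ⟪gf x, v⟫ + ⟪gf (x + s • v) - gf x, v⟫ := by
        rw [inner_sub_left]; ring
    _ ≤ ⟪gf x, v⟫ + L * ‖(x + s • v) - x‖ * ‖v‖ := by
        gcongr
        exact (real_inner_le_norm _ _).trans (by gcongr; exact hsmooth _ _)
    _ = ⟪gf x, v⟫ + 2 * s * (L / 2 * ‖v‖ ^ 2) := by
        rw [add_sub_cancel_left, norm_smul, Real.norm_of_nonneg hs.1]; ring

theorem inner_sub_le_neg_of_minimizes_prox_model {X : Set E} (hX : Convex ℝ X) {γ : ℝ}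
    (A : E →L[ℝ] E) {g x x' : E} (hx : x ∈ X) (hx' : x' ∈ X)
    (hmin : ∀ y ∈ X, ⟪g, x'⟫ + (1 / (2 * γ)) * ⟪A (x' - x), x' - x⟫
      ≤ ⟪g, y⟫ + (1 / (2 * γ)) * ⟪A (y - x), y - x⟫) :
    ⟪g, x' - x⟫ ≤ -(1 / γ) * ⟪A (x' - x), x' - x⟫ := by
  set u := x' - x
  set Q := ⟪A u, u⟫
  -- compare `x'` with the points `x' - s • u` of the segment `[x, x']` and let `s → 0+`
  have hseg : ∀ s ∈ Set.Ioc (0 : ℝ) 1, ⟪g, u⟫ + (1 / γ) * Q ≤ s * ((1 / (2 * γ)) * Q) := by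
    rintro s ⟨hs0, hs1⟩
    have hy : x' - s • u ∈ X := by
      convert hX hx hx' hs0.le (sub_nonneg.2 hs1) (by ring) using 1
      simp only [u]; module
    have h := hmin _ hy
    have hyx : x' - s • u - x = (1 - s) • u := by simp only [u]; module
    rw [hyx, map_smul, real_inner_smul_left, real_inner_smul_right, inner_sub_right,
      real_inner_smul_right] at h
    have : s * (⟪g, u⟫ + (1 / γ) * Q) ≤ s * (s * ((1 / (2 * γ)) * Q)) := by
      have e : (1 / γ) = 2 * (1 / (2 * γ)) := by ring
      rw [e]; nlinarith
    exact le_of_mul_le_mul_left this hs0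
  have hlim : Tendsto (fun s : ℝ => s * ((1 / (2 * γ)) * Q)) (𝓝[>] 0) (𝓝 0) :=
    ((continuous_mul_const _).tendsto' 0 0 (zero_mul _)).mono_left nhdsWithin_le_nhds
  have := ge_of_tendsto hlim (by filter_upwards [Ioc_mem_nhdsGT one_pos] using hseg)
  linarith

theorem mul_le_div_mul_sq_add_div_mul_sq {ρ γ : ℝ} (hρ : 0 < ρ) (hγ : 0 < γ) (a b : ℝ) :
    a * b ≤ γ / (2 * ρ) * a ^ 2 + ρ / (2 * γ) * b ^ 2 := by
  have := sq_nonneg (γ * a - ρ * b)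
  rw [div_mul_eq_mul_div, div_mul_eq_mul_div, div_add_div _ _ (by positivity) (by positivity),
    le_div_iff₀ (by positivity)]
  nlinarith

theorem apply_step_le_of_prox_model [CompleteSpace E] {f : E → ℝ} {gf : E → E} {L : ℝ}
    (hgf : ∀ x, HasGradientAt f (gf x) x) (hsmooth : ∀ x y, ‖gf x - gf y‖ ≤ L * ‖x - y‖)
    {X : Set E} (hX : Convex ℝ X) {ρ γ μ : ℝ} (hρ : 0 < ρ) (hγ : 0 < γ) (hμ : 0 ≤ μ)
    (hμL : L * μ ≤ ρ / (8 * γ)) (A : E →L[ℝ] E) (hA : ∀ v, ρ * ‖v‖ ^ 2 ≤ ⟪A v, v⟫)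
    {g x x' : E} (hx : x ∈ X) (hx' : x' ∈ X)
    (hmin : ∀ y ∈ X, ⟪g, x'⟫ + (1 / (2 * γ)) * ⟪A (x' - x), x' - x⟫
      ≤ ⟪g, y⟫ + (1 / (2 * γ)) * ⟪A (y - x), y - x⟫) :
    f ((1 - μ) • x + μ • x') ≤
      f x + μ * (γ / (2 * ρ)) * ‖gf x - g‖ ^ 2 - μ * (7 * ρ / (16 * γ)) * ‖x' - x‖ ^ 2 := by
  set u := x' - x
  have hdesc := le_add_inner_add_half_mul_sq_of_gradient_lipschitz hgf hsmooth x
    ((1 - μ) • x + μ • x')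
  rw [show (1 - μ) • x + μ • x' - x = μ • u by simp only [u]; module, real_inner_smul_right,
    norm_smul, Real.norm_of_nonneg hμ, mul_pow] at hdesc
  have hmodel : ⟪g, u⟫ ≤ -(ρ / γ) * ‖u‖ ^ 2 := by
    have hQ := mul_le_mul_of_nonneg_left (hA u) (one_div_nonneg.2 hγ.le)
    linear_combination inner_sub_le_neg_of_minimizes_prox_model hX A hx hx' hmin + hQ
  have hgrad : ⟪gf x, u⟫ ≤ γ / (2 * ρ) * ‖gf x - g‖ ^ 2 - ρ / (2 * γ) * ‖u‖ ^ 2 := by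
    have hcs := real_inner_le_norm (gf x - g) u
    rw [inner_sub_left] at hcs
    linear_combination hcs + hmodel + mul_le_div_mul_sq_add_div_mul_sq hρ hγ ‖gf x - g‖ ‖u‖
  have hcurv := mul_le_mul_of_nonneg_left hμL (mul_nonneg hμ (sq_nonneg ‖u‖))
  linear_combination hdesc + mul_le_mul_of_nonneg_left hgrad hμ + hcurv / 2

theorem norm_apply_step_sub_le {gf : E → E} {L : ℝ} (hsmooth : ∀ x y, ‖gf x - gf y‖ ≤ L * ‖x - y‖)
    {μ : ℝ} (hμ : 0 ≤ μ) (x x' g : E) :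
    ‖gf ((1 - μ) • x + μ • x') - g‖ ≤ ‖gf x - g‖ + L * μ * ‖x' - x‖ := by
  have hstep := hsmooth ((1 - μ) • x + μ • x') x
  rw [show (1 - μ) • x + μ • x' - x = μ • (x' - x) by module, norm_smul,
    Real.norm_of_nonneg hμ] at hstep
  linarith [norm_sub_le_norm_sub_add_norm_sub (gf ((1 - μ) • x + μ • x')) (gf x) g]

theorem Convex.iterates_mem {X : Set E} (hX : Convex ℝ X) {x x' : ℕ → E} {μ : ℕ → ℝ}
    (hμ0 : ∀ t, 0 ≤ μ t) (hμ1 : ∀ t, μ t ≤ 1) (hx1 : x 1 ∈ X) (hx' : ∀ t, 1 ≤ t → x' t ∈ X)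
    (hrec : ∀ t, 1 ≤ t → x (t + 1) = (1 - μ t) • x t + μ t • x' t) :
    ∀ t, 1 ≤ t → x t ∈ X := by
  intro t ht
  induction t, ht using Nat.le_induction with
  | base => exact hx1
  | succ t ht ih =>
    rw [hrec t ht]
    exact hX ih (hx' t ht) (sub_nonneg.2 (hμ1 t)) (hμ0 t) (by ring)

end InnerProductSpace

theorem one_sub_sq_mul_sq_le {a p q r : ℝ} (ha0 : 0 < a) (ha1 : a ≤ 1) (hq : 0 ≤ q)
    (hqpr : q ≤ p + r) : (1 - a) ^ 2 * q ^ 2 ≤ (1 - a) * p ^ 2 + 1 / a * r ^ 2 := by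
  have h1a : 0 ≤ 1 - a := sub_nonneg.2 ha1
  have hsq : q ^ 2 ≤ (p + r) ^ 2 := pow_le_pow_left₀ hq hqpr 2
  have hyoung : a * (p + r) ^ 2 ≤ (1 + a) * (a * p ^ 2 + r ^ 2) := by
    nlinarith [sq_nonneg (a * p - r)]
  rw [← mul_le_mul_iff_of_pos_left ha0]
  calc a * ((1 - a) ^ 2 * q ^ 2) = (1 - a) ^ 2 * (a * q ^ 2) := by ring
    _ ≤ (1 - a) ^ 2 * (a * (p + r) ^ 2) := by gcongr
    _ ≤ (1 - a) ^ 2 * ((1 + a) * (a * p ^ 2 + r ^ 2)) := by gcongr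
    _ = (1 - a) * (1 - a ^ 2) * (a * p ^ 2 + r ^ 2) := by ring
    _ ≤ (1 - a) * 1 * (a * p ^ 2 + r ^ 2) := by gcongr; nlinarith
    _ ≤ a * (1 - a) * p ^ 2 + r ^ 2 := by nlinarith [mul_nonneg ha0.le (sq_nonneg r)]
    _ = a * ((1 - a) * p ^ 2 + 1 / a * r ^ 2) := by field_simp

theorem sum_Icc_le_sub_of_le_sub_succ {u d : ℕ → ℝ} {T : ℕ} (hT : 1 ≤ T)
    (h : ∀ t ∈ Finset.Icc 1 T, d t ≤ u t - u (t + 1)) :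
    ∑ t ∈ Finset.Icc 1 T, d t ≤ u 1 - u (T + 1) := by
  refine (Finset.sum_le_sum h).trans_eq ?_
  simpa only [neg_sub_neg] using Finset.sum_Icc_sub hT (fun t => -u t)

theorem sum_Icc_inv_add_le_log_sub_log {m : ℝ} (hm : 0 < m) (T : ℕ) :
    ∑ t ∈ Finset.Icc 1 T, (m + t)⁻¹ ≤ Real.log (m + T) - Real.log m := by
  induction T with
  | zero => simp
  | succ T ih =>
    rw [Finset.sum_Icc_succ_top (by omega)]
    have hlog := Real.one_sub_inv_le_log_of_pos (x := (m + (T + 1 : ℕ)) / (m + T)) (by positivity)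
    rw [Real.log_div (by positivity) (by positivity), inv_div,
      show 1 - (m + T) / (m + (T + 1 : ℕ)) = (m + (T + 1 : ℕ))⁻¹ by field_simp; push_cast; ring]
      at hlog
    linarith

theorem sum_Icc_div_sqrt_sq_le {k m : ℝ} (hm : 0 < m) (T : ℕ) :
    ∑ t ∈ Finset.Icc 1 T, (k / √(m + t)) ^ 2 ≤ k ^ 2 * (Real.log (m + T) - Real.log m) := by
  have hsq : ∀ t : ℕ, (k / √(m + t)) ^ 2 = k ^ 2 * (m + t)⁻¹ := fun t => by
    rw [div_pow, Real.sq_sqrt (by positivity), div_eq_mul_inv]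
  simp_rw [hsq, ← Finset.mul_sum]
  exact mul_le_mul_of_nonneg_left (sum_Icc_inv_add_le_log_sub_log hm T) (sq_nonneg k)

section StepSize

variable {μ A B F : ℕ → ℝ} {k m L ρ γ c : ℝ} {T : ℕ}

theorem stepSize_le_one (hk : 0 < k) (hm : k ^ 2 ≤ m) (hμ : ∀ t, μ t = k / √(m + t)) (t : ℕ) :
    μ t ≤ 1 := by
  have hm0 : 0 < m := (by positivity : (0 : ℝ) < k ^ 2).trans_le hm
  rw [hμ, div_le_one (by positivity), Real.le_sqrt' hk]
  linarith [(Nat.cast_nonneg t : (0 : ℝ) ≤ t)]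

theorem mul_stepSize_le (hk : 0 < k) (hm : 0 < m) (hμ : ∀ t, μ t = k / √(m + t)) {a b : ℝ}
    (hb : 0 < b) (hab : a ≤ b * √m / k) (t : ℕ) : a * μ t ≤ b := by
  calc a * μ t ≤ b * √m / k * (k / √m) := by
        rw [hμ]; gcongr; simp
    _ = b := by field_simp

theorem lipschitz_mul_stepSize_le (hk : 0 < k) (hm : 0 < m) (hL : 0 < L) (hρ : 0 < ρ)
    (hγ0 : 0 < γ) (hμ : ∀ t, μ t = k / √(m + t)) (hγ : γ ≤ ρ * √m / (8 * L * k)) (t : ℕ) :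
    L * μ t ≤ ρ / (8 * γ) := by
  refine mul_stepSize_le hk hm hμ (by positivity) ?_ t
  rw [le_div_iff₀ (by positivity)] at hγ ⊢
  rw [div_mul_eq_mul_div, le_div_iff₀ (by positivity)]
  linarith

theorem sum_mul_le_of_descent (hT : 1 ≤ T)
    (hdesc : ∀ t, 1 ≤ t →
      F (t + 1) ≤ F t + μ t * (γ / (2 * ρ)) * A t - μ t * (7 * ρ / (16 * γ)) * B t) :
    7 * ρ / (16 * γ) * ∑ t ∈ Finset.Icc 1 T, μ t * B t
      - γ / (2 * ρ) * ∑ t ∈ Finset.Icc 1 T, μ t * A t ≤ F 1 - F (T + 1) := by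
  have := sum_Icc_le_sub_of_le_sub_succ hT (u := F)
    (d := fun t => 7 * ρ / (16 * γ) * (μ t * B t) - γ / (2 * ρ) * (μ t * A t))
    fun t ht => by linear_combination hdesc t (Finset.mem_Icc.1 ht).1
  simpa only [Finset.sum_sub_distrib, ← Finset.mul_sum] using this

theorem sum_mul_le_of_momentum_recursion {σ : ℝ} (hT : 1 ≤ T) (hL : 0 < L) (hγ : 0 < γ)
    (hc : 0 < c) (hρc : 8 * L * γ ≤ ρ * c) (hμ : ∀ t, 0 ≤ μ t) (hB : ∀ t, 0 ≤ B t)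
    (hrec : ∀ t, 1 ≤ t → A (t + 1) ≤
      (1 - c * μ t) * A t + 1 / (c * μ t) * (L * μ t) ^ 2 * B t + (c * μ t) ^ 2 * σ ^ 2) :
    ∑ t ∈ Finset.Icc 1 T, μ t * A t - ρ ^ 2 / (64 * γ ^ 2) * ∑ t ∈ Finset.Icc 1 T, μ t * B t
      - c * σ ^ 2 * ∑ t ∈ Finset.Icc 1 T, μ t ^ 2 ≤ A 1 / c - A (T + 1) / c := by
  have hLc : L ^ 2 / c ^ 2 ≤ ρ ^ 2 / (64 * γ ^ 2) := by
    rw [div_le_div_iff₀ (by positivity) (by positivity)]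
    nlinarith [mul_pos hL hγ]
  have := sum_Icc_le_sub_of_le_sub_succ hT (u := fun t => A t / c)
    (d := fun t => μ t * A t - ρ ^ 2 / (64 * γ ^ 2) * (μ t * B t) - c * σ ^ 2 * μ t ^ 2)
    fun t ht => by
      have hstep := hrec t (Finset.mem_Icc.1 ht).1
      have hcoef := mul_le_mul_of_nonneg_right hLc (mul_nonneg (hμ t) (hB t))
      rw [show 1 / (c * μ t) * (L * μ t) ^ 2 = c * (L ^ 2 / c ^ 2 * μ t) by field_simp] at hstep
      rw [← sub_div, le_div_iff₀ hc]
      linear_combination hstep + c * hcoef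
  simpa only [Finset.sum_sub_distrib, ← Finset.mul_sum] using this

theorem accumulated_variance_le (σ : ℝ) (hk : 0 < k) (hm : 0 < m) (hL : 0 < L)
    (hρ : 0 < ρ) (hc : 0 < c) (hμ : ∀ t, μ t = k / √(m + t))
    (hγ : γ ≤ ρ * √m / (8 * L * k)) (hρc : 8 * L * γ ≤ ρ * c) (hc2 : c ≤ √m / k) :
    γ / ρ * (σ ^ 2 / c + c * σ ^ 2 * ∑ t ∈ Finset.Icc 1 T, μ t ^ 2)
      ≤ σ ^ 2 / (8 * L) * (m * Real.log (m + T) + 2) := by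
  set SQ := ∑ t ∈ Finset.Icc 1 T, μ t ^ 2
  have hSQ : SQ ≤ k ^ 2 * (Real.log (m + T) - Real.log m) := by
    simp_rw [SQ, hμ]; exact sum_Icc_div_sqrt_sq_le hm T
  have hγc : γ * c ≤ ρ * m / (8 * L * k ^ 2) := by
    calc γ * c ≤ ρ * √m / (8 * L * k) * (√m / k) := mul_le_mul hγ hc2 hc.le (by positivity)
      _ = ρ * m / (8 * L * k ^ 2) := by
        field_simp; rw [Real.sq_sqrt hm.le]
  -- `m - 1 ≤ m log m` is where the second `σ²/(8L)` comes from
  have hmlog : m * (Real.log (m + T) - Real.log m) ≤ m * Real.log (m + T) + 1 := by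
    have := mul_le_mul_of_nonneg_left (Real.one_sub_inv_le_log_of_pos hm) hm.le
    rw [mul_sub, mul_one, mul_inv_cancel₀ hm.ne'] at this
    nlinarith
  have hinit : γ / ρ * (σ ^ 2 / c) ≤ σ ^ 2 / (8 * L) := by
    rw [div_mul_div_comm, div_le_div_iff₀ (by positivity) (by positivity)]
    nlinarith [mul_le_mul_of_nonneg_left hρc (sq_nonneg σ)]
  have hsum : γ / ρ * (c * σ ^ 2 * SQ) ≤ σ ^ 2 / (8 * L) * (m * Real.log (m + T) + 1) := by
    have hSQ0 : 0 ≤ SQ := Finset.sum_nonneg fun t _ => sq_nonneg (μ t)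
    calc γ / ρ * (c * σ ^ 2 * SQ) = γ * c * (σ ^ 2 * SQ / ρ) := by ring
      _ ≤ ρ * m / (8 * L * k ^ 2) * (σ ^ 2 * SQ / ρ) := by gcongr
      _ = σ ^ 2 / (8 * L) * (m * (SQ / k ^ 2)) := by field_simp
      _ ≤ σ ^ 2 / (8 * L) * (m * (Real.log (m + T) - Real.log m)) := by
        gcongr; rwa [div_le_iff₀ (by positivity), mul_comm]
      _ ≤ σ ^ 2 / (8 * L) * (m * Real.log (m + T) + 1) := by gcongr
  linear_combination hinit + hsum

theorem weighted_sum_le_of_descent_of_momentum_recursion {σ fstar : ℝ} (hT : 1 ≤ T)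
    (hk : 0 < k) (hm : 0 < m) (hL : 0 < L) (hρ : 0 < ρ) (hγ0 : 0 < γ) (hμ : ∀ t, μ t = k / √(m + t))
    (hγ : γ ≤ ρ * √m / (8 * L * k)) (hc1 : 8 * L * γ / ρ ≤ c) (hc2 : c ≤ √m / k)
    (hB : ∀ t, 0 ≤ B t)
    (hdesc : ∀ t, 1 ≤ t →
      F (t + 1) ≤ F t + μ t * (γ / (2 * ρ)) * A t - μ t * (7 * ρ / (16 * γ)) * B t)
    (hrec : ∀ t, 1 ≤ t → A (t + 1) ≤
      (1 - c * μ t) * A t + 1 / (c * μ t) * (L * μ t) ^ 2 * B t + (c * μ t) ^ 2 * σ ^ 2)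
    (hA1 : A 1 ≤ σ ^ 2) (hAT : 0 ≤ A (T + 1)) (hF : fstar ≤ F (T + 1)) :
    γ / (4 * ρ) * ∑ t ∈ Finset.Icc 1 T, μ t * A t + ρ / (4 * γ) * ∑ t ∈ Finset.Icc 1 T, μ t * B t
      ≤ F 1 - fstar + 2 * σ ^ 2 / L + 2 * m * σ ^ 2 / L * Real.log (m + T) := by
  have hμ0 : ∀ t, 0 ≤ μ t := fun t => by rw [hμ]; positivity
  have hρc : 8 * L * γ ≤ ρ * c := by rwa [div_le_iff₀ hρ, mul_comm c] at hc1
  have hc : 0 < c := pos_of_mul_pos_right ((by positivity : 0 < 8 * L * γ).trans_le hρc) hρ.le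
  set SA := ∑ t ∈ Finset.Icc 1 T, μ t * A t
  set SB := ∑ t ∈ Finset.Icc 1 T, μ t * B t
  have hSA : γ / ρ * SA ≤ ρ / (64 * γ) * SB + σ ^ 2 / (8 * L) * (m * Real.log (m + T) + 2) := by
    have hA1c : A 1 / c - A (T + 1) / c ≤ σ ^ 2 / c := by
      rw [← sub_div]; gcongr; linarith
    have := mul_le_mul_of_nonneg_left
      ((sum_mul_le_of_momentum_recursion hT hL hγ0 hc hρc hμ0 hB hrec).trans hA1c)
      (by positivity : 0 ≤ γ / ρ)
    have e : γ / ρ * (ρ ^ 2 / (64 * γ ^ 2)) = ρ / (64 * γ) := by field_simp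
    linear_combination this + accumulated_variance_le σ hk hm hL hρ hc hμ hγ hρc hc2
      + SB * e
  have hSB0 : 0 ≤ ρ / γ * SB :=
    mul_nonneg (by positivity) (Finset.sum_nonneg fun t _ => mul_nonneg (hμ0 t) (hB t))
  have hlog0 : 0 ≤ m * σ ^ 2 * Real.log (m + T) / L := by
    have : (1 : ℝ) ≤ T := by exact_mod_cast hT
    have := Real.log_nonneg (by linarith : (1 : ℝ) ≤ m + T)
    positivity
  -- the descent sum plus `3/4` of the recursion sum; the remaining terms are slack
  linear_combination sum_mul_le_of_descent hT hdesc + hF + 3 / 4 * hSA + 45 / 256 * hSB0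
    + 29 / 16 * (by positivity : 0 ≤ σ ^ 2 / L) + 61 / 32 * hlog0

theorem sum_le_of_descent_of_momentum_recursion {σ fstar : ℝ} (hT : 1 ≤ T) (hk : 0 < k)
    (hm : 0 < m) (hL : 0 < L) (hρ : 0 < ρ) (hγ0 : 0 < γ) (hμ : ∀ t, μ t = k / √(m + t))
    (hγ : γ ≤ ρ * √m / (8 * L * k)) (hc1 : 8 * L * γ / ρ ≤ c) (hc2 : c ≤ √m / k)
    (hA : ∀ t, 0 ≤ A t) (hB : ∀ t, 0 ≤ B t)
    (hdesc : ∀ t, 1 ≤ t →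
      F (t + 1) ≤ F t + μ t * (γ / (2 * ρ)) * A t - μ t * (7 * ρ / (16 * γ)) * B t)
    (hrec : ∀ t, 1 ≤ t → A (t + 1) ≤
      (1 - c * μ t) * A t + 1 / (c * μ t) * (L * μ t) ^ 2 * B t + (c * μ t) ^ 2 * σ ^ 2)
    (hA1 : A 1 ≤ σ ^ 2) (hF : fstar ≤ F (T + 1)) :
    ∑ t ∈ Finset.Icc 1 T, (1 / (4 * ρ ^ 2) * A t + 1 / (4 * γ ^ 2) * B t)
      ≤ ((F 1 - fstar) / (ρ * γ * k) + 2 * σ ^ 2 / (ρ * γ * k * L)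
          + 2 * m * σ ^ 2 / (ρ * γ * k * L) * Real.log (m + T)) * √(m + T) := by
  have hweighted := weighted_sum_le_of_descent_of_momentum_recursion hT hk hm hL hρ hγ0 hμ hγ
    hc1 hc2 hB hdesc hrec hA1 (hA (T + 1)) hF
  have hlast : μ T * ∑ t ∈ Finset.Icc 1 T, (1 / (4 * ρ ^ 2) * A t + 1 / (4 * γ ^ 2) * B t)
      ≤ 1 / (ρ * γ) * (γ / (4 * ρ) * ∑ t ∈ Finset.Icc 1 T, μ t * A t
        + ρ / (4 * γ) * ∑ t ∈ Finset.Icc 1 T, μ t * B t) := by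
    simp only [Finset.mul_sum, ← Finset.sum_add_distrib]
    refine Finset.sum_le_sum fun t ht => ?_
    have hμt : μ T ≤ μ t := by
      rw [hμ, hμ]
      gcongr
      exact_mod_cast (Finset.mem_Icc.1 ht).2
    calc μ T * (1 / (4 * ρ ^ 2) * A t + 1 / (4 * γ ^ 2) * B t)
        ≤ μ t * (1 / (4 * ρ ^ 2) * A t + 1 / (4 * γ ^ 2) * B t) := by
          gcongr
          exact add_nonneg (mul_nonneg (by positivity) (hA t)) (mul_nonneg (by positivity) (hB t))
      _ = _ := by field_simp
  have hμT : 0 < μ T := by rw [hμ]; positivity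
  refine le_of_mul_le_mul_left (hlast.trans ?_) hμT
  calc _ ≤ 1 / (ρ * γ) * (F 1 - fstar + 2 * σ ^ 2 / L + 2 * m * σ ^ 2 / L * Real.log (m + T)) := by
        gcongr
    _ = _ := by rw [hμ]; field_simp

end StepSize

theorem integral_le_mul_integral_add_mul_integral {Ω : Type*} [MeasurableSpace Ω] {P : Measure Ω}
    {u v w : Ω → ℝ} (hu : Integrable u P) (hv : Integrable v P) (hw : Integrable w P) {b c : ℝ}
    (h : ∀ ω, u ω ≤ b * v ω + c * w ω) :
    ∫ ω, u ω ∂P ≤ b * ∫ ω, v ω ∂P + c * ∫ ω, w ω ∂P := by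
  rw [← integral_const_mul, ← integral_const_mul,
    ← integral_add (hv.const_mul b) (hw.const_mul c)]
  exact integral_mono hu ((hv.const_mul b).add (hw.const_mul c)) h

theorem integrable_comp_of_forall_mem_isCompact {Ω E : Type*} [MeasurableSpace Ω]
    {P : Measure Ω} [IsFiniteMeasure P] [TopologicalSpace E] [MeasurableSpace E]
    [OpensMeasurableSpace E] {f : E → ℝ}
    (hf : Continuous f) {X : Set E} (hX : IsCompact X) {x : Ω → E} (hx : Measurable x)
    (hmem : ∀ ω, x ω ∈ X) : Integrable (fun ω => f (x ω)) P := by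
  obtain ⟨C, hC⟩ := hX.exists_bound_of_continuousOn hf.continuousOn
  exact Integrable.of_bound (hf.measurable.comp hx).aestronglyMeasurable C
    (Eventually.of_forall fun ω => hC _ (hmem ω))

theorem integral_norm_sub_sample_sq_le {Ω Ξ E : Type*} [MeasurableSpace Ω] {P : Measure Ω}
    [MeasurableSpace Ξ] {D : Measure Ξ} [NormedAddCommGroup E] [MeasurableSpace E] [BorelSpace E]
    {gS : Ξ → E → E} (hgS : Measurable (Function.uncurry gS))
    {gf : E → E} {σ : ℝ} (hvar : ∀ x, ∫ s, ‖gS s x - gf x‖ ^ 2 ∂D ≤ σ ^ 2) {ξ : Ω → Ξ}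
    (hξ : Measurable ξ) (hlaw : P.map ξ = D) (y : E) :
    ∫ ω, ‖gf y - gS (ξ ω) y‖ ^ 2 ∂P ≤ σ ^ 2 := by
  have hsample : Measurable fun s => ‖gS s y - gf y‖ ^ 2 :=
    ((hgS.comp (measurable_id.prodMk measurable_const)).sub_const _).norm.pow_const 2
  simp_rw [norm_sub_rev (gf y)]
  calc _ = ∫ s, ‖gS s y - gf y‖ ^ 2 ∂(P.map ξ) :=
        (integral_map hξ.aemeasurable hsample.aestronglyMeasurable).symm
    _ ≤ σ ^ 2 := hlaw ▸ hvar y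

theorem ProbabilityTheory.IndepFun.integral_comp_le {Ω α β : Type*} [MeasurableSpace Ω]
    {P : Measure Ω} [IsProbabilityMeasure P] [MeasurableSpace α] [MeasurableSpace β]
    {W : Ω → α} {Y : Ω → β} (hind : IndepFun W Y P) (hW : Measurable W) (hY : Measurable Y)
    {Φ : α × β → ℝ} (hΦ : Measurable Φ) {h : α → ℝ} (hh : Measurable h)
    (hΦint : Integrable (fun ω => Φ (W ω, Y ω)) P) (hhint : Integrable (fun ω => h (W ω)) P)
    (hle : ∀ w, Integrable (fun y => Φ (w, y)) (P.map Y) → ∫ y, Φ (w, y) ∂(P.map Y) ≤ h w) :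
    ∫ ω, Φ (W ω, Y ω) ∂P ≤ ∫ ω, h (W ω) ∂P := by
  have hpair : Measurable fun ω => (W ω, Y ω) := hW.prodMk hY
  have hmap : P.map (fun ω => (W ω, Y ω)) = (P.map W).prod (P.map Y) :=
    (indepFun_iff_map_prod_eq_prod_map_map hW.aemeasurable hY.aemeasurable).1 hind
  have hΦint' : Integrable Φ ((P.map W).prod (P.map Y)) := by
    rw [← hmap, integrable_map_measure hΦ.aestronglyMeasurable hpair.aemeasurable]
    exact hΦint
  have hhint' : Integrable h (P.map W) :=
    (integrable_map_measure hh.aestronglyMeasurable hW.aemeasurable).2 hhint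
  calc ∫ ω, Φ (W ω, Y ω) ∂P = ∫ w, ∫ y, Φ (w, y) ∂(P.map Y) ∂(P.map W) := by
        rw [← integral_prod _ hΦint', ← hmap,
          integral_map hpair.aemeasurable hΦ.aestronglyMeasurable]
    _ ≤ ∫ w, h w ∂(P.map W) :=
        integral_mono_ae hΦint'.integral_prod_left hhint' (hΦint'.prod_right_ae.mono hle)
    _ = ∫ ω, h (W ω) ∂P := integral_map hW.aemeasurable hh.aestronglyMeasurable

section Sampling

variable {E : Type*} [NormedAddCommGroup E] [InnerProductSpace ℝ E] [CompleteSpace E]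
  {Ξ : Type*} [MeasurableSpace Ξ] {D : Measure Ξ} [IsProbabilityMeasure D]

theorem integral_norm_add_sq_of_integral_eq_zero {Z : Ξ → E} (hZ : MemLp Z 2 D)
    (hmean : ∫ s, Z s ∂D = 0) (v : E) :
    ∫ s, ‖v + Z s‖ ^ 2 ∂D = ‖v‖ ^ 2 + ∫ s, ‖Z s‖ ^ 2 ∂D := by
  have hZ1 : Integrable Z D := hZ.integrable one_le_two
  have hZ2 : Integrable (fun s => ‖Z s‖ ^ 2) D := hZ.integrable_norm_pow two_ne_zero
  have hlin : Integrable (fun s => ‖v‖ ^ 2 + 2 * ⟪v, Z s⟫) D :=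
    (integrable_const _).add ((hZ1.const_inner v).const_mul 2)
  simp_rw [norm_add_sq_real]
  rw [integral_add hlin hZ2, integral_add (integrable_const _) ((hZ1.const_inner v).const_mul 2),
    integral_const_mul, integral_inner hZ1, hmean]
  simp

theorem integral_norm_smul_add_smul_sub_sq_le {G : Ξ → E} {m u : E} {a σ : ℝ}
    (hG : AEStronglyMeasurable G D) (hmean : ∫ s, G s ∂D = m)
    (hvar : ∫ s, ‖G s - m‖ ^ 2 ∂D ≤ σ ^ 2) (ha : a ≠ 0)
    (hint : Integrable (fun s => ‖(1 - a) • u + a • (m - G s)‖ ^ 2) D) :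
    ∫ s, ‖(1 - a) • u + a • (m - G s)‖ ^ 2 ∂D ≤ (1 - a) ^ 2 * ‖u‖ ^ 2 + a ^ 2 * σ ^ 2 := by
  have hZ : MemLp (fun s => a • (m - G s)) 2 D := by
    have := ((memLp_two_iff_integrable_sq_norm (by fun_prop)).2 hint).sub
      (memLp_const ((1 - a) • u))
    convert this using 1
    ext s
    simp
  have hGint : Integrable G D := by
    have := (integrable_smul_iff ha _).1 (hZ.integrable one_le_two)
    convert (integrable_const m).sub this using 1
    ext s
    simp
  have hZmean : ∫ s, a • (m - G s) ∂D = 0 := by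
    rw [integral_smul, integral_sub (integrable_const m) hGint, hmean]; simp
  rw [integral_norm_add_sq_of_integral_eq_zero hZ hZmean]
  simp_rw [norm_smul, mul_pow, Real.norm_eq_abs, sq_abs, norm_sub_rev m]
  rw [integral_const_mul]
  gcongr

theorem integral_norm_sub_momentum_sq_le {Ω β : Type*} [MeasurableSpace Ω] {P : Measure Ω}
    [IsProbabilityMeasure P] [MeasurableSpace β] [MeasurableSpace E] [BorelSpace E]
    [SecondCountableTopology E] {gS : Ξ → E → E} (hgS : Measurable (Function.uncurry gS))
    {gf : E → E} (hgf : Measurable gf) (hunbiased : ∀ x, ∫ s, gS s x ∂D = gf x) {σ : ℝ}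
    (hvar : ∀ x, ∫ s, ‖gS s x - gf x‖ ^ 2 ∂D ≤ σ ^ 2)
    {W : Ω → β} {Y : Ω → Ξ} (hW : Measurable W) (hY : Measurable Y) (hind : IndepFun W Y P)
    (hlaw : P.map Y = D) {p r : β → E} (hp : Measurable p) (hr : Measurable r) {a : ℝ}
    (ha : a ≠ 0)
    (hint : Integrable
      (fun ω => ‖gf (p (W ω)) - ((1 - a) • r (W ω) + a • gS (Y ω) (p (W ω)))‖ ^ 2) P)
    (hint' : Integrable (fun ω => ‖gf (p (W ω)) - r (W ω)‖ ^ 2) P) :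
    ∫ ω, ‖gf (p (W ω)) - ((1 - a) • r (W ω) + a • gS (Y ω) (p (W ω)))‖ ^ 2 ∂P
      ≤ (1 - a) ^ 2 * ∫ ω, ‖gf (p (W ω)) - r (W ω)‖ ^ 2 ∂P + a ^ 2 * σ ^ 2 := by
  have hsplit : ∀ w s, gf (p w) - ((1 - a) • r w + a • gS s (p w))
      = (1 - a) • (gf (p w) - r w) + a • (gf (p w) - gS s (p w)) := fun _ _ => by module
  simp_rw [hsplit] at hint ⊢
  have hsample : Measurable fun q : β × Ξ => gS q.2 (p q.1) :=
    hgS.comp (measurable_snd.prodMk (hp.comp measurable_fst))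
  have hΦ : Measurable fun q : β × Ξ =>
      ‖(1 - a) • (gf (p q.1) - r q.1) + a • (gf (p q.1) - gS q.2 (p q.1))‖ ^ 2 := by
    have hgrad : Measurable fun q : β × Ξ => gf (p q.1) := (hgf.comp hp).comp measurable_fst
    exact ((((hgrad.sub (hr.comp measurable_fst)).const_smul (1 - a)).add
      ((hgrad.sub hsample).const_smul a)).norm.pow_const 2)
  have hh : Measurable fun w => (1 - a) ^ 2 * ‖gf (p w) - r w‖ ^ 2 + a ^ 2 * σ ^ 2 :=
    ((((hgf.comp hp).sub hr).norm.pow_const 2).const_mul _).add_const _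
  calc _ ≤ ∫ ω, (1 - a) ^ 2 * ‖gf (p (W ω)) - r (W ω)‖ ^ 2 + a ^ 2 * σ ^ 2 ∂P := by
        refine hind.integral_comp_le hW hY hΦ hh hint
          ((hint'.const_mul _).add (integrable_const _)) fun w hw => ?_
        rw [hlaw] at hw ⊢
        dsimp only at hw ⊢
        exact integral_norm_smul_add_smul_sub_sq_le
          (hgS.comp (measurable_id.prodMk measurable_const)).aestronglyMeasurable
          (hunbiased _) (hvar _) ha hw
    _ = _ := by
        rw [integral_add (hint'.const_mul _) (integrable_const _), integral_const_mul]
        simp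

theorem integral_momentum_error_step_le {Ω : Type*} [MeasurableSpace Ω] {P : Measure Ω}
    [IsProbabilityMeasure P] [MeasurableSpace E] [BorelSpace E] [SecondCountableTopology E]
    {gS : Ξ → E → E} (hgS : Measurable (Function.uncurry gS)) {gf : E → E} {L σ : ℝ}
    (hL : 0 ≤ L) (hsmooth : ∀ x y, ‖gf x - gf y‖ ≤ L * ‖x - y‖)
    (hunbiased : ∀ x, ∫ s, gS s x ∂D = gf x) (hvar : ∀ x, ∫ s, ‖gS s x - gf x‖ ^ 2 ∂D ≤ σ ^ 2)
    {x x' xnext g gnext : Ω → E} {Y : Ω → Ξ} (hx : Measurable x) (hx' : Measurable x')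
    (hg : Measurable g) (hY : Measurable Y)
    (hind : IndepFun (fun ω => (x ω, x' ω, g ω)) Y P) (hlaw : P.map Y = D)
    {μ a : ℝ} (hμ : 0 ≤ μ) (ha0 : 0 < a) (ha1 : a ≤ 1)
    (hxnext : ∀ ω, xnext ω = (1 - μ) • x ω + μ • x' ω)
    (hgnext : ∀ ω, gnext ω = (1 - a) • g ω + a • gS (Y ω) (xnext ω))
    (hint : Integrable (fun ω => ‖gf (x ω) - g ω‖ ^ 2) P)
    (hint' : Integrable (fun ω => ‖x' ω - x ω‖ ^ 2) P)
    (hintnext : Integrable (fun ω => ‖gf (xnext ω) - gnext ω‖ ^ 2) P) :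
    ∫ ω, ‖gf (xnext ω) - gnext ω‖ ^ 2 ∂P ≤ (1 - a) * ∫ ω, ‖gf (x ω) - g ω‖ ^ 2 ∂P
      + 1 / a * (L * μ) ^ 2 * ∫ ω, ‖x' ω - x ω‖ ^ 2 ∂P + a ^ 2 * σ ^ 2 := by
  obtain rfl : xnext = fun ω => (1 - μ) • x ω + μ • x' ω := funext hxnext
  obtain rfl : gnext = fun ω => (1 - a) • g ω + a • gS (Y ω) ((1 - μ) • x ω + μ • x' ω) :=
    funext hgnext
  have hgfc : Continuous gf :=
    (LipschitzWith.of_dist_le_mul (K := ⟨L, hL⟩) fun y z => by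
      rw [dist_eq_norm, dist_eq_norm]; exact hsmooth y z).continuous
  have htri := fun ω => norm_apply_step_sub_le hsmooth hμ (x ω) (x' ω) (g ω)
  have hintmid : Integrable (fun ω => ‖gf ((1 - μ) • x ω + μ • x' ω) - g ω‖ ^ 2) P := by
    refine (((hint.const_mul 2).add (hint'.const_mul (2 * (L * μ) ^ 2)))).mono' ?_
      (Eventually.of_forall fun ω => ?_)
    · exact (((hgfc.measurable.comp ((hx.const_smul _).add (hx'.const_smul _))).sub
        hg).norm.pow_const 2).aestronglyMeasurable
    · rw [Real.norm_of_nonneg (sq_nonneg _), Pi.add_apply]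
      nlinarith [htri ω, norm_nonneg (gf ((1 - μ) • x ω + μ • x' ω) - g ω),
        sq_nonneg (‖gf (x ω) - g ω‖ - L * μ * ‖x' ω - x ω‖)]
  have hmom := integral_norm_sub_momentum_sq_le (W := fun ω => (x ω, x' ω, g ω))
    (p := fun w => (1 - μ) • w.1 + μ • w.2.1) (r := fun w => w.2.2) hgS hgfc.measurable
    hunbiased hvar (hx.prodMk (hx'.prodMk hg)) hY hind hlaw (by fun_prop) (by fun_prop)
    ha0.ne' hintnext hintmid
  have hmid := integral_le_mul_integral_add_mul_integral (b := 1 - a) (c := 1 / a * (L * μ) ^ 2)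
    (hintmid.const_mul ((1 - a) ^ 2))
    hint hint' fun ω => by
      have := one_sub_sq_mul_sq_le ha0 ha1 (norm_nonneg _) (htri ω)
      linear_combination this
  rw [integral_const_mul] at hmid
  dsimp only at hmom ⊢
  linarith

theorem integral_apply_step_le_of_prox_model {Ω : Type*} [MeasurableSpace Ω] {P : Measure Ω}
    {f : E → ℝ} {gf : E → E} {L : ℝ} (hgf : ∀ x, HasGradientAt f (gf x) x)
    (hsmooth : ∀ x y, ‖gf x - gf y‖ ≤ L * ‖x - y‖) {X : Set E} (hX : Convex ℝ X) {ρ γ μ : ℝ}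
    (hρ : 0 < ρ) (hγ : 0 < γ) (hμ : 0 ≤ μ) (hμL : L * μ ≤ ρ / (8 * γ))
    (A : Ω → E →L[ℝ] E) (hA : ∀ ω v, ρ * ‖v‖ ^ 2 ≤ ⟪A ω v, v⟫) {g x x' xnext : Ω → E}
    (hx : ∀ ω, x ω ∈ X) (hx' : ∀ ω, x' ω ∈ X)
    (hmin : ∀ ω, ∀ y ∈ X, ⟪g ω, x' ω⟫ + (1 / (2 * γ)) * ⟪A ω (x' ω - x ω), x' ω - x ω⟫
      ≤ ⟪g ω, y⟫ + (1 / (2 * γ)) * ⟪A ω (y - x ω), y - x ω⟫)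
    (hxnext : ∀ ω, xnext ω = (1 - μ) • x ω + μ • x' ω)
    (hf : Integrable (fun ω => f (x ω)) P) (hfnext : Integrable (fun ω => f (xnext ω)) P)
    (hint : Integrable (fun ω => ‖gf (x ω) - g ω‖ ^ 2) P)
    (hint' : Integrable (fun ω => ‖x' ω - x ω‖ ^ 2) P) :
    ∫ ω, f (xnext ω) ∂P ≤ ∫ ω, f (x ω) ∂P + μ * (γ / (2 * ρ)) * ∫ ω, ‖gf (x ω) - g ω‖ ^ 2 ∂P
      - μ * (7 * ρ / (16 * γ)) * ∫ ω, ‖x' ω - x ω‖ ^ 2 ∂P := by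
  have := integral_le_mul_integral_add_mul_integral (hfnext.sub hf) hint hint'
    (u := fun ω => f (xnext ω) - f (x ω)) (b := μ * (γ / (2 * ρ)))
    (c := -(μ * (7 * ρ / (16 * γ)))) fun ω => by
      have := apply_step_le_of_prox_model hgf hsmooth hX hρ hγ hμ hμL (A ω) (hA ω) (hx ω) (hx' ω)
        (hmin ω)
      rw [hxnext]
      linarith
  rw [integral_sub hfnext hf] at this
  linarith

end Sampling

theorem statement17_general {d : ℕ} {Ω : Type*} [MeasurableSpace Ω] (P : Measure Ω)
    [IsProbabilityMeasure P] {Ξ : Type*} [MeasurableSpace Ξ] (D : Measure Ξ)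
    [IsProbabilityMeasure D]
    (X : Set (EuclideanSpace ℝ (Fin d)))
    (hXcompact : IsCompact X) (hXconvex : Convex ℝ X)
    (gS : Ξ → EuclideanSpace ℝ (Fin d) → EuclideanSpace ℝ (Fin d))
    (f : EuclideanSpace ℝ (Fin d) → ℝ)
    (gf : EuclideanSpace ℝ (Fin d) → EuclideanSpace ℝ (Fin d))
    (L σ ρ γ k m c fstar : ℝ) (hL : 0 < L) (hρ : 0 < ρ)
    (hgf : ∀ x, HasGradientAt f (gf x) x)
    (hsmooth : ∀ x y : EuclideanSpace ℝ (Fin d), ‖gf x - gf y‖ ≤ L * ‖x - y‖)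
    (hunbiased : ∀ x, ∫ ξ, gS ξ x ∂D = gf x)
    (hvar : ∀ x, ∫ ξ, ‖gS ξ x - gf x‖ ^ 2 ∂D ≤ σ ^ 2)
    (hgSmeas : Measurable (Function.uncurry gS))
    (hfstar : ∀ x ∈ X, fstar ≤ f x)
    (hk : 0 < k)
    (hm : k ^ 2 ≤ m)
    (μ α : ℕ → ℝ)
    (hμ : ∀ t : ℕ, μ t = k / (m + t) ^ ((1 : ℝ) / 2))
    (hα : ∀ t : ℕ, α (t + 1) = c * μ t)
    (hγ0 : 0 < γ) (hγ : γ ≤ ρ * m ^ ((1 : ℝ) / 2) / (8 * L * k))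
    (hc1 : 8 * L * γ / ρ ≤ c) (hc2 : c ≤ m ^ ((1 : ℝ) / 2) / k)
    (x xtil g : ℕ → Ω → EuclideanSpace ℝ (Fin d))
    (ξ : ℕ → Ω → Ξ) (H : ℕ → Ω → Matrix (Fin d) (Fin d) ℝ)
    (x1 : EuclideanSpace ℝ (Fin d)) (hx1X : x1 ∈ X) (hx1 : ∀ ω, x 1 ω = x1)
    (hxmeas : ∀ t, Measurable (x t)) (hxtilmeas : ∀ t, Measurable (xtil t))
    (hgmeas : ∀ t, Measurable (g t)) (hξmeas : ∀ t, Measurable (ξ t))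
    (hHpd : ∀ t ω (v : EuclideanSpace ℝ (Fin d)),
      ρ * ‖v‖ ^ 2 ≤ ⟪(Matrix.toEuclideanCLM (𝕜 := ℝ) (H t ω)) v, v⟫)
    (hxtilX : ∀ t, 1 ≤ t → ∀ ω, xtil t ω ∈ X)
    (hxtilmin : ∀ t, 1 ≤ t → ∀ ω, ∀ y ∈ X,
      ⟪g t ω, xtil t ω⟫ + (1 / (2 * γ))
          * ⟪(Matrix.toEuclideanCLM (𝕜 := ℝ) (H t ω)) (xtil t ω - x t ω), xtil t ω - x t ω⟫
        ≤ ⟪g t ω, y⟫ + (1 / (2 * γ))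
          * ⟪(Matrix.toEuclideanCLM (𝕜 := ℝ) (H t ω)) (y - x t ω), y - x t ω⟫)
    (hxrec : ∀ t, 1 ≤ t → ∀ ω, x (t + 1) ω = (1 - μ t) • x t ω + μ t • xtil t ω)
    (hg1 : ∀ ω, g 1 ω = gS (ξ 1 ω) (x 1 ω))
    (hgrec : ∀ t, 1 ≤ t → ∀ ω,
      g (t + 1) ω = (1 - α (t + 1)) • g t ω + α (t + 1) • gS (ξ (t + 1) ω) (x (t + 1) ω))
    (hlaw : ∀ t, Measure.map (ξ t) P = D)
    (hindep : ∀ t, 1 ≤ t → IndepFun (fun ω => (x t ω, xtil t ω, g t ω)) (ξ (t + 1)) P)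
    (hint1 : ∀ t, 1 ≤ t → Integrable (fun ω => ‖gf (x t ω) - g t ω‖ ^ 2) P)
    (hint2 : ∀ t, 1 ≤ t → Integrable (fun ω => ‖xtil t ω - x t ω‖ ^ 2) P) :
    ∀ T : ℕ, 1 ≤ T → ∀ M : ℝ,
      M = (f x1 - fstar) / (ρ * γ * k) + 2 * σ ^ 2 / (ρ * γ * k * L)
          + 2 * m * σ ^ 2 / (ρ * γ * k * L) * Real.log (m + T) →
      (1 / (T : ℝ)) * ∑ t ∈ Finset.Icc 1 T,
          ∫ ω, ((1 / (4 * ρ ^ 2)) * ‖gf (x t ω) - g t ω‖ ^ 2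
            + (1 / (4 * γ ^ 2)) * ‖xtil t ω - x t ω‖ ^ 2) ∂P
        ≤ M * (m + T) ^ ((1 : ℝ) / 2) / (T : ℝ) := by
  intro T hT M hM
  rw [← Real.sqrt_eq_rpow] at hγ hc2 ⊢
  have hm0 : 0 < m := (by positivity : (0 : ℝ) < k ^ 2).trans_le hm
  have hμ' : ∀ t : ℕ, μ t = k / √(m + t) := fun t => by rw [hμ, Real.sqrt_eq_rpow]
  have hμ0 : ∀ t, 0 < μ t := fun t => by rw [hμ']; positivity
  have hc0 : 0 < c := (by positivity : 0 < 8 * L * γ / ρ).trans_le hc1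
  have hxX : ∀ t, 1 ≤ t → ∀ ω, x t ω ∈ X := fun t ht ω =>
    hXconvex.iterates_mem (x := fun t => x t ω) (fun t => (hμ0 t).le) (stepSize_le_one hk hm hμ')
      (hx1 ω ▸ hx1X) (fun t ht => hxtilX t ht ω) (fun t ht => hxrec t ht ω) t ht
  have hfint : ∀ t, 1 ≤ t → Integrable (fun ω => f (x t ω)) P := fun t ht =>
    integrable_comp_of_forall_mem_isCompact
      (continuous_iff_continuousAt.2 fun x => (hgf x).differentiableAt.continuousAt)
      hXcompact (hxmeas t) (hxX t ht)
  have key := sum_le_of_descent_of_momentum_recursion (F := fun t => ∫ ω, f (x t ω) ∂P)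
    (A := fun t => ∫ ω, ‖gf (x t ω) - g t ω‖ ^ 2 ∂P)
    (B := fun t => ∫ ω, ‖xtil t ω - x t ω‖ ^ 2 ∂P) hT hk hm0 hL hρ hγ0 hμ' hγ hc1 hc2
    (fun t => integral_nonneg fun ω => by positivity)
    (fun t => integral_nonneg fun ω => by positivity)
    (fun t ht => integral_apply_step_le_of_prox_model hgf hsmooth hXconvex hρ hγ0 (hμ0 t).le
      (lipschitz_mul_stepSize_le hk hm0 hL hρ hγ0 hμ' hγ t)
      (fun ω => Matrix.toEuclideanCLM (𝕜 := ℝ) (H t ω)) (hHpd t) (hxX t ht) (hxtilX t ht)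
      (hxtilmin t ht) (hxrec t ht) (hfint t ht) (hfint (t + 1) (by omega)) (hint1 t ht)
      (hint2 t ht))
    (fun t ht => by
      rw [← hα t]
      exact integral_momentum_error_step_le hgSmeas hL.le hsmooth hunbiased hvar (hxmeas t)
        (hxtilmeas t) (hgmeas t) (hξmeas (t + 1)) (hindep t ht) (hlaw (t + 1)) (hμ0 t).le
        (hα t ▸ mul_pos hc0 (hμ0 t))
        (hα t ▸ mul_stepSize_le hk hm0 hμ' one_pos (by rwa [one_mul]) t)
        (hxrec t ht) (hgrec t ht) (hint1 t ht) (hint2 t ht) (hint1 (t + 1) (by omega)))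
    (by simpa only [hg1, hx1] using
      integral_norm_sub_sample_sq_le hgSmeas hvar (hξmeas 1) (hlaw 1) x1)
    (by simpa using integral_mono (integrable_const fstar) (hfint (T + 1) (by omega))
          fun ω => hfstar _ (hxX _ (by omega) ω))
  have hsplit : ∀ t ∈ Finset.Icc 1 T,
      ∫ ω, ((1 / (4 * ρ ^ 2)) * ‖gf (x t ω) - g t ω‖ ^ 2
        + (1 / (4 * γ ^ 2)) * ‖xtil t ω - x t ω‖ ^ 2) ∂P
      = 1 / (4 * ρ ^ 2) * ∫ ω, ‖gf (x t ω) - g t ω‖ ^ 2 ∂P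
        + 1 / (4 * γ ^ 2) * ∫ ω, ‖xtil t ω - x t ω‖ ^ 2 ∂P := fun t ht => by
    have ht := (Finset.mem_Icc.1 ht).1
    rw [integral_add ((hint1 t ht).const_mul _) ((hint2 t ht).const_mul _), integral_const_mul,
      integral_const_mul]
  rw [Finset.sum_congr rfl hsplit, hM, one_div_mul_eq_div]
  simp only [hx1, integral_const, probReal_univ, one_smul] at key
  exact div_le_div_of_nonneg_right key (Nat.cast_nonneg T)

/-- squared-error bound along SUPER-ADAM with `τ = 0` on a compact
convex set `X ⊆ ℝ^d`: under the hypotheses of Theorem 2 of SUPER-ADAM, for every `T ≥ 1`,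
`(1/T) Σ_{t=1}^T E[(1/(4ρ²))‖∇f(x_t) − g_t‖² + (1/(4γ²))‖x̃_{t+1} − x_t‖²]
  ≤ M (m+T)^{1/2}/T`,
where `M = (f(x_1) − f*)/(ργk) + 2σ²/(ργkL) + 2mσ² ln(m+T)/(ργkL)`. -/
theorem statement17 {d : ℕ} {Ω : Type*} [MeasurableSpace Ω] (P : Measure Ω)
    [IsProbabilityMeasure P] {Ξ : Type*} [MeasurableSpace Ξ] (D : Measure Ξ)
    [IsProbabilityMeasure D]
    (X : Set (EuclideanSpace ℝ (Fin d))) (hXne : X.Nonempty)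
    (hXcompact : IsCompact X) (hXconvex : Convex ℝ X)
    (fS : Ξ → EuclideanSpace ℝ (Fin d) → ℝ)
    (gS : Ξ → EuclideanSpace ℝ (Fin d) → EuclideanSpace ℝ (Fin d))
    (f : EuclideanSpace ℝ (Fin d) → ℝ)
    (gf : EuclideanSpace ℝ (Fin d) → EuclideanSpace ℝ (Fin d))
    (L σ ρ γ k m c fstar : ℝ) (hL : 0 < L) (hσ : 0 ≤ σ) (hρ : 0 < ρ)
    (hf : ∀ x, f x = ∫ ξ, fS ξ x ∂D)
    (hgS : ∀ ξ x, HasGradientAt (fS ξ) (gS ξ x) x)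
    (hgf : ∀ x, HasGradientAt f (gf x) x)
    (hsmooth : ∀ x y : EuclideanSpace ℝ (Fin d), ‖gf x - gf y‖ ≤ L * ‖x - y‖)
    (hunbiased : ∀ x, ∫ ξ, gS ξ x ∂D = gf x)
    (hvar : ∀ x, ∫ ξ, ‖gS ξ x - gf x‖ ^ 2 ∂D ≤ σ ^ 2)
    (hgSmeas : Measurable (Function.uncurry gS))
    (hfstar : ∀ x ∈ X, fstar ≤ f x)
    (hk : 0 < k)
    (hm : k ^ 2 ≤ m)
    (μ α : ℕ → ℝ)
    (hμ : ∀ t : ℕ, μ t = k / (m + t) ^ ((1 : ℝ) / 2))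
    (hα : ∀ t : ℕ, α (t + 1) = c * μ t)
    (hγ0 : 0 < γ) (hγ : γ ≤ ρ * m ^ ((1 : ℝ) / 2) / (8 * L * k))
    (hc1 : 8 * L * γ / ρ ≤ c) (hc2 : c ≤ m ^ ((1 : ℝ) / 2) / k)
    (x xtil g : ℕ → Ω → EuclideanSpace ℝ (Fin d))
    (ξ : ℕ → Ω → Ξ) (H : ℕ → Ω → Matrix (Fin d) (Fin d) ℝ)
    (x1 : EuclideanSpace ℝ (Fin d)) (hx1X : x1 ∈ X) (hx1 : ∀ ω, x 1 ω = x1)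
    (hxmeas : ∀ t, Measurable (x t)) (hxtilmeas : ∀ t, Measurable (xtil t))
    (hgmeas : ∀ t, Measurable (g t)) (hξmeas : ∀ t, Measurable (ξ t))
    (hHsymm : ∀ t ω, (H t ω).IsSymm)
    (hHpd : ∀ t ω (v : EuclideanSpace ℝ (Fin d)),
      ρ * ‖v‖ ^ 2 ≤ ⟪(Matrix.toEuclideanCLM (𝕜 := ℝ) (H t ω)) v, v⟫)
    (hxtilX : ∀ t, 1 ≤ t → ∀ ω, xtil t ω ∈ X)
    (hxtilmin : ∀ t, 1 ≤ t → ∀ ω, ∀ y ∈ X,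
      ⟪g t ω, xtil t ω⟫ + (1 / (2 * γ))
          * ⟪(Matrix.toEuclideanCLM (𝕜 := ℝ) (H t ω)) (xtil t ω - x t ω), xtil t ω - x t ω⟫
        ≤ ⟪g t ω, y⟫ + (1 / (2 * γ))
          * ⟪(Matrix.toEuclideanCLM (𝕜 := ℝ) (H t ω)) (y - x t ω), y - x t ω⟫)
    (hxrec : ∀ t, 1 ≤ t → ∀ ω, x (t + 1) ω = (1 - μ t) • x t ω + μ t • xtil t ω)
    (hg1 : ∀ ω, g 1 ω = gS (ξ 1 ω) (x 1 ω))
    (hgrec : ∀ t, 1 ≤ t → ∀ ω,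
      g (t + 1) ω = (1 - α (t + 1)) • g t ω + α (t + 1) • gS (ξ (t + 1) ω) (x (t + 1) ω))
    (hlaw : ∀ t, Measure.map (ξ t) P = D)
    (hindep : ∀ t, 1 ≤ t → IndepFun (fun ω => (x t ω, xtil t ω, g t ω)) (ξ (t + 1)) P)
    (hint1 : ∀ t, 1 ≤ t → Integrable (fun ω => ‖gf (x t ω) - g t ω‖ ^ 2) P)
    (hint2 : ∀ t, 1 ≤ t → Integrable (fun ω => ‖xtil t ω - x t ω‖ ^ 2) P) :
    ∀ T : ℕ, 1 ≤ T → ∀ M : ℝ,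
      M = (f x1 - fstar) / (ρ * γ * k) + 2 * σ ^ 2 / (ρ * γ * k * L)
          + 2 * m * σ ^ 2 / (ρ * γ * k * L) * Real.log (m + T) →
      (1 / (T : ℝ)) * ∑ t ∈ Finset.Icc 1 T,
          ∫ ω, ((1 / (4 * ρ ^ 2)) * ‖gf (x t ω) - g t ω‖ ^ 2
            + (1 / (4 * γ ^ 2)) * ‖xtil t ω - x t ω‖ ^ 2) ∂P
        ≤ M * (m + T) ^ ((1 : ℝ) / 2) / (T : ℝ) :=
  statement17_general P D X hXcompact hXconvex gS f gf L σ ρ γ k m c fstar hL hρ hgf hsmooth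
    hunbiased hvar hgSmeas hfstar hk hm μ α hμ hα hγ0 hγ hc1 hc2 x xtil g ξ H x1 hx1X hx1 hxmeas
    hxtilmeas hgmeas hξmeas hHpd hxtilX hxtilmin hxrec hg1 hgrec hlaw hindep hint1 hint2
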